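/- For every positive integer n, the Narayana polynomial of type A, N^A_n(x) = Σ_{k=1}^{n} (1/n)·C(n,k)·C(n,k-1)·x^k, has only real roots. -/

import Mathlib

open Polynomial
open Nat

/-- The Narayana polynomial of type A: `N^A_n(x) = ∑_{k=1}^n (1/n) C(n,k) C(n,k-1) x^k`. -/
noncomputable def narayanaA (n : ℕ) : Polynomial ℚ :=
  ∑ k ∈ Finset.Icc 1 n, C ((n.choose k * n.choose (k - 1) : ℚ) / n) * X ^ k

noncomputable def cQ (n k : ℕ) : ℚ := if k = 0 then 0 else (n.choose k * n.choose (k-1) : ℚ) / n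

lemma factNe (m : ℕ) : ((m.factorial : ℚ)) ≠ 0 := Nat.cast_ne_zero.2 (Nat.factorial_ne_zero _)

-- main factorial identity, k = a+2, n = a+d+2
lemma key_main (a d : ℕ) :
    ((a:ℚ)+d+2+2) * ((((a+d+3).choose (a+2) : ℕ):ℚ) * (((a+d+3).choose (a+1):ℕ):ℚ) / ((a:ℚ)+d+3))
      = ((a:ℚ)+d+2 + 2*((a:ℚ)+2)) * ((((a+d+2).choose (a+2):ℕ):ℚ) * (((a+d+2).choose (a+1):ℕ):ℚ) / ((a:ℚ)+d+2))
      + (3*((a:ℚ)+d+2)+4 - 2*((a:ℚ)+2)) * ((((a+d+2).choose (a+1):ℕ):ℚ) * (((a+d+2).choose a:ℕ):ℚ) / ((a:ℚ)+d+2)) := by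
  have h1 : (((a+d+3).choose (a+2) : ℕ):ℚ) = ((a+d+3)! : ℚ) / ((a+2)! * (d+1)!) := by
    rw [show a+d+3 = (a+2)+(d+1) by ring]; exact Nat.cast_add_choose ℚ
  have h2 : (((a+d+3).choose (a+1) : ℕ):ℚ) = ((a+d+3)! : ℚ) / ((a+1)! * (d+2)!) := by
    rw [show a+d+3 = (a+1)+(d+2) by ring]; exact Nat.cast_add_choose ℚ
  have h3 : (((a+d+2).choose (a+2) : ℕ):ℚ) = ((a+d+2)! : ℚ) / ((a+2)! * d !) := by
    rw [show a+d+2 = (a+2)+d by ring]; exact Nat.cast_add_choose ℚ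
  have h4 : (((a+d+2).choose (a+1) : ℕ):ℚ) = ((a+d+2)! : ℚ) / ((a+1)! * (d+1)!) := by
    rw [show a+d+2 = (a+1)+(d+1) by ring]; exact Nat.cast_add_choose ℚ
  have h5 : (((a+d+2).choose a : ℕ):ℚ) = ((a+d+2)! : ℚ) / (a ! * (d+2)!) := by
    rw [show a+d+2 = a+(d+2) by ring]; exact Nat.cast_add_choose ℚ
  have e1 : ((a+d+3)! : ℚ) = ((a:ℚ)+d+3) * ((a+d+2)!) := by
    rw [show a+d+3 = (a+d+2)+1 by ring, Nat.factorial_succ]; push_cast; ring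
  have e2 : (((a+2))! : ℚ) = ((a:ℚ)+2) * (((a:ℚ)+1)) * (a !) := by
    rw [show a+2 = (a+1)+1 by ring, Nat.factorial_succ, Nat.factorial_succ]; push_cast; ring
  have e3 : (((a+1))! : ℚ) = (((a:ℚ)+1)) * (a !) := by
    rw [Nat.factorial_succ]; push_cast; ring
  have e4 : (((d+2))! : ℚ) = ((d:ℚ)+2) * (((d:ℚ)+1)) * (d !) := by
    rw [show d+2 = (d+1)+1 by ring, Nat.factorial_succ, Nat.factorial_succ]; push_cast; ring
  have e5 : (((d+1))! : ℚ) = (((d:ℚ)+1)) * (d !) := by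
    rw [Nat.factorial_succ]; push_cast; ring
  rw [h1, h2, h3, h4, h5, e1, e2, e3, e4, e5]
  have nA := factNe a
  have nD := factNe d
  have nE := factNe (a+d+2)
  have p1 : ((a:ℚ)+1) ≠ 0 := by positivity
  have p2 : ((a:ℚ)+2) ≠ 0 := by positivity
  have p3 : ((d:ℚ)+1) ≠ 0 := by positivity
  have p4 : ((d:ℚ)+2) ≠ 0 := by positivity
  have p5 : ((a:ℚ)+d+2) ≠ 0 := by positivity
  have p6 : ((a:ℚ)+d+3) ≠ 0 := by positivity
  field_simp
  ring

lemma key_scalar (n k : ℕ) (hn : 1 ≤ n) (hk : 1 ≤ k) :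
    ((n:ℚ)+2) * cQ (n+1) k = ((n:ℚ) + 2*k) * cQ n k + (3*(n:ℚ)+4 - 2*k) * cQ n (k-1) := by
  have hn0 : ((n:ℚ)) ≠ 0 := by
    exact_mod_cast Nat.cast_ne_zero.2 (by omega)
  rcases Nat.eq_or_lt_of_le hk with h1 | h2
  · -- k = 1
    subst h1
    simp only [cQ, if_neg (one_ne_zero), if_pos rfl, show (1:ℕ)-1 = 0 from rfl,
      Nat.choose_one_right, Nat.choose_zero_right]
    push_cast
    field_simp
    try ring
  · -- k ≥ 2
    rcases Nat.lt_or_ge n (k-1) with hbig | hle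
    · -- k ≥ n+2 : all zero
      have hk2 : n + 2 ≤ k := by omega
      simp only [cQ, if_neg (by omega : k ≠ 0), if_neg (by omega : k - 1 ≠ 0)]
      rw [Nat.choose_eq_zero_of_lt (by omega : n+1 < k),
          Nat.choose_eq_zero_of_lt (by omega : n < k),
          Nat.choose_eq_zero_of_lt (by omega : n < k-1)]
      push_cast; ring
    · rcases Nat.eq_or_lt_of_le hle with he | hlt
      · -- k = n+1
        have hk' : k = n+1 := by omega
        subst hk'
        simp only [cQ, if_neg (by omega : n+1 ≠ 0), if_neg (by omega : n+1-1 ≠ 0)]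
        have hnc : (n.choose (n-1) : ℚ) = n := by
          obtain ⟨m, hm⟩ : ∃ m, n = m+1 := ⟨n-1, by omega⟩
          subst hm
          rw [show m+1-1 = m from rfl, Nat.choose_succ_self_right]
        rw [show n+1-1 = n from rfl, Nat.choose_self, Nat.choose_succ_self_right,
            Nat.choose_eq_zero_of_lt (by omega : n < n+1), Nat.choose_self]
        push_cast [hnc]
        field_simp
        try ring
      · -- 2 ≤ k ≤ n
        obtain ⟨a, ha⟩ : ∃ a, k = a + 2 := ⟨k - 2, by omega⟩
        obtain ⟨d, hd⟩ : ∃ d, n = a + d + 2 := ⟨n - k, by omega⟩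
        subst ha hd
        simp only [cQ, if_neg (by omega : a+2 ≠ 0), if_neg (by omega : a+2-1 ≠ 0),
          show a+2-1 = a+1 from rfl, show a+1-1 = a from rfl]
        have := key_main a d
        push_cast at this ⊢
        convert this using 2 <;> push_cast <;> ring

lemma nar_coeff (n k : ℕ) : (narayanaA n).coeff k = cQ n k := by
  unfold narayanaA cQ
  rw [finset_sum_coeff]
  simp only [coeff_C_mul, coeff_X_pow, mul_ite, mul_one, mul_zero]
  rw [Finset.sum_ite_eq (Finset.Icc 1 n) k]
  by_cases h0 : k = 0
  · simp [h0]
  · by_cases hmem : k ∈ Finset.Icc 1 n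
    · simp [hmem, h0]
    · rw [if_neg hmem, if_neg h0]
      have : n < k := by
        simp only [Finset.mem_Icc] at hmem; omega
      rw [Nat.choose_eq_zero_of_lt this]
      simp


lemma nar_rec (n : ℕ) (hn : 1 ≤ n) :
    C ((n:ℚ)+2) * narayanaA (n+1) =
      C (n:ℚ) * narayanaA n + C (3*(n:ℚ)+2) * (narayanaA n * X)
      + C 2 * (derivative (narayanaA n) * X) - C 2 * (derivative (narayanaA n) * X^2) := by
  ext k
  simp only [coeff_C_mul, coeff_add, coeff_sub]
  rcases k with _ | k
  · simp [nar_coeff, cQ, mul_coeff_zero]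
  · rw [coeff_mul_X, coeff_mul_X, coeff_mul_X_pow', coeff_derivative, coeff_derivative,
        nar_coeff, nar_coeff, nar_coeff]
    have hks := key_scalar n (k+1) hn (by omega)
    rcases Nat.eq_zero_or_pos k with h0 | hpos
    · subst h0
      rw [if_neg (by omega : ¬ 2 ≤ 0+1)]
      rw [show cQ n 0 = 0 from rfl] at hks ⊢
      push_cast at hks ⊢
      linarith
    · obtain ⟨j, rfl⟩ : ∃ j, k = j+1 := ⟨k-1, by omega⟩
      rw [show j+1+1-1 = j+1 from rfl] at hks
      rw [nar_coeff]
      push_cast at hks ⊢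
      linear_combination hks

lemma nar_coeff_self (n : ℕ) (hn : 1 ≤ n) : (narayanaA n).coeff n = 1 := by
  rw [nar_coeff]
  unfold cQ
  rw [if_neg (by omega : n ≠ 0), Nat.choose_self]
  obtain ⟨m, rfl⟩ : ∃ m, n = m+1 := ⟨n-1, by omega⟩
  rw [show m+1-1 = m from rfl, Nat.choose_succ_self_right]
  have : ((m:ℚ)+1) ≠ 0 := by positivity
  push_cast
  field_simp

lemma nar_natDegree (n : ℕ) (hn : 1 ≤ n) : (narayanaA n).natDegree = n := by
  have hle : (narayanaA n).natDegree ≤ n := by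
    rw [Polynomial.natDegree_le_iff_coeff_eq_zero]
    intro m hm
    rw [nar_coeff]
    unfold cQ
    rw [if_neg (by omega : m ≠ 0), Nat.choose_eq_zero_of_lt hm]
    simp
  have hge : n ≤ (narayanaA n).natDegree :=
    Polynomial.le_natDegree_of_ne_zero (by rw [nar_coeff_self n hn]; norm_num)
  omega

lemma nar_monic (n : ℕ) (hn : 1 ≤ n) : (narayanaA n).Monic := by
  unfold Polynomial.Monic Polynomial.leadingCoeff
  rw [nar_natDegree n hn, nar_coeff_self n hn]

-- positivity of eval at positive reals
lemma nar_pos (n : ℕ) (hn : 1 ≤ n) (x : ℝ) (hx : 0 < x) :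
    0 < Polynomial.eval x ((narayanaA n).map (algebraMap ℚ ℝ)) := by
  rw [narayanaA, Polynomial.map_sum, Polynomial.eval_finset_sum]
  apply Finset.sum_pos'
  · intro k hk
    simp only [Polynomial.map_mul, Polynomial.map_C, Polynomial.map_pow, Polynomial.map_X,
      eval_mul, eval_C, eval_pow, eval_X]
    have h1 : (0:ℝ) ≤ (algebraMap ℚ ℝ) ((n.choose k * n.choose (k - 1) : ℚ) / n) := by
      rw [eq_ratCast]
      have : (0:ℚ) ≤ (n.choose k * n.choose (k - 1) : ℚ) / n := by positivity
      exact_mod_cast this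
    positivity
  · refine ⟨1, Finset.mem_Icc.2 ⟨le_refl 1, hn⟩, ?_⟩
    simp only [Polynomial.map_mul, Polynomial.map_C, Polynomial.map_pow, Polynomial.map_X,
      eval_mul, eval_C, eval_pow, eval_X]
    rw [Nat.choose_one_right, show (1:ℕ)-1 = 0 from rfl, Nat.choose_zero_right]
    have hn' : ((n:ℚ)) ≠ 0 := by exact_mod_cast Nat.cast_ne_zero.2 (by omega)
    rw [eq_ratCast]
    push_cast
    rw [mul_one, div_self (by exact_mod_cast Nat.cast_ne_zero.2 (by omega : n ≠ 0) : (n:ℝ) ≠ 0)]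
    simpa using hx

noncomputable def tfun (z : ℂ) (c : ℝ) : ℝ :=
  -2 + 2*(c^2 - c)/((z.re - c)^2 + z.im^2)

lemma lemB (z : ℂ) (c : ℝ) (hz : z.im ≠ 0) :
    (2*(z - z^2) * (z - (c:ℂ))⁻¹).im = z.im * tfun z c := by
  have hQ : (z.re - c)^2 + z.im^2 ≠ 0 := by
    have h2 : 0 < z.im^2 := lt_of_le_of_ne (sq_nonneg _) (Ne.symm (pow_ne_zero 2 hz))
    nlinarith [sq_nonneg (z.re - c)]
  have hQ' : (z.re - c)*(z.re - c) + z.im*z.im ≠ 0 := by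
    have := hQ; nlinarith [sq_nonneg (z.re - c), sq_nonneg z.im,
      lt_of_le_of_ne (sq_nonneg z.im) (Ne.symm (pow_ne_zero 2 hz))]
  rw [show z^2 = z*z from sq z]
  unfold tfun
  simp only [Complex.mul_im, Complex.mul_re, Complex.inv_im, Complex.inv_re,
    Complex.sub_re, Complex.sub_im, Complex.normSq_apply, Complex.ofReal_re,
    Complex.ofReal_im, Complex.re_ofNat, Complex.im_ofNat]
  field_simp
  ring

lemma lemB2 (z : ℂ) (c : ℝ) (hz : z.im ≠ 0) (hc : c ≤ 0) : -2 ≤ tfun z c := by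
  have hQ : 0 < (z.re - c)^2 + z.im^2 := by
    have h2 : 0 < z.im^2 := lt_of_le_of_ne (sq_nonneg _) (Ne.symm (pow_ne_zero 2 hz))
    nlinarith [sq_nonneg (z.re - c)]
  unfold tfun
  have : 0 ≤ 2*(c^2 - c)/((z.re - c)^2 + z.im^2) := by
    apply div_nonneg _ hQ.le
    nlinarith
  linarith

lemma deriv_prod_eval (R : Multiset ℂ) (z : ℂ) (h : ∀ r ∈ R, z - r ≠ 0) :
    eval z (derivative (R.map (fun r => X - C r)).prod)
      = eval z ((R.map (fun r => X - C r)).prod) * (R.map (fun r => (z - r)⁻¹)).sum := by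
  induction R using Multiset.induction with
  | empty => simp
  | cons a S ih =>
    rw [Multiset.map_cons, Multiset.prod_cons, derivative_mul, Multiset.map_cons,
      Multiset.sum_cons]
    have ha : z - a ≠ 0 := h a (Multiset.mem_cons_self _ _)
    simp only [derivative_sub, derivative_X, derivative_C, sub_zero, eval_add, eval_mul,
      eval_one, eval_sub, eval_X, eval_C]
    rw [ih (fun r hr => h r (Multiset.mem_cons_of_mem hr))]
    field_simp

lemma im_msum (M : Multiset ℂ) : M.sum.im = (M.map Complex.im).sum := by
  induction M using Multiset.induction with
  | empty => simp
  | cons a S ih => simp [ih]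

lemma eval_ofReal_map (p : Polynomial ℚ) (x : ℝ) :
    eval ((x:ℝ):ℂ) (p.map (algebraMap ℚ ℂ)) = ((eval x (p.map (algebraMap ℚ ℝ)) : ℝ) : ℂ) := by
  rw [eval_map, eval_map]
  calc eval₂ (algebraMap ℚ ℂ) ((x:ℝ):ℂ) p
      = eval₂ (Complex.ofRealHom.comp (algebraMap ℚ ℝ)) (Complex.ofRealHom x) p :=
        congrArg (fun f : ℚ →+* ℂ => eval₂ f ((x:ℝ):ℂ) p) (Subsingleton.elim _ _)
    _ = Complex.ofRealHom (eval₂ (algebraMap ℚ ℝ) x p) := (Polynomial.hom_eval₂ _ _ _ _).symm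
    _ = _ := rfl

lemma nar_real_root_nonpos (n : ℕ) (hn : 1 ≤ n) (z : ℂ)
    (hroot : ((narayanaA n).map (algebraMap ℚ ℂ)).IsRoot z) (him : z.im = 0) :
    z.re ≤ 0 := by
  by_contra hpos
  push_neg at hpos
  have hz : z = ((z.re : ℝ) : ℂ) := Complex.ext rfl (by simp [him])
  rw [Polynomial.IsRoot, hz, eval_ofReal_map, Complex.ofReal_eq_zero] at hroot
  have := nar_pos n hn z.re hpos
  linarith

lemma nar_aux : ∀ n : ℕ, 1 ≤ n → ∀ z : ℂ,
    ((narayanaA n).map (algebraMap ℚ ℂ)).IsRoot z → z.im = 0 ∧ z.re ≤ 0 := by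
  intro n hn1
  induction n, hn1 using Nat.le_induction with
  | base =>
    intro z hz
    have h1 : narayanaA 1 = X := by
      unfold narayanaA
      rw [show Finset.Icc 1 1 = {1} from rfl]
      simp
    rw [h1] at hz
    simp only [Polynomial.map_X, Polynomial.IsRoot, eval_X] at hz
    subst hz
    exact ⟨rfl, le_refl 0⟩
  | succ n hn ih =>
    intro z hroot
    have him : z.im = 0 := by
      by_contra hy
      -- set up
      set Q : Polynomial ℂ := (narayanaA n).map (algebraMap ℚ ℂ) with hQdef
      have hQmonic : Q.Monic := (nar_monic n hn).map _
      have hQdeg : Q.natDegree = n := by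
        rw [hQdef, Monic.natDegree_map (nar_monic n hn), nar_natDegree n hn]
      set R : Multiset ℂ := Q.roots with hRdef
      have hcard : R.card = n := by
        rw [hRdef, ← hQdeg]
        exact (Polynomial.splits_iff_card_roots.1 (IsAlgClosed.splits _))
      have hQfact : Q = (R.map fun a => X - C a).prod :=
        (IsAlgClosed.splits _).eq_prod_roots_of_monic hQmonic
      have hQne : Q ≠ 0 := hQmonic.ne_zero
      have hRprop : ∀ r ∈ R, r.im = 0 ∧ r.re ≤ 0 := fun r hr =>
        ih r (Polynomial.isRoot_of_mem_roots hr)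
      have hzr : ∀ r ∈ R, z - r ≠ 0 := by
        intro r hr
        have := (hRprop r hr).1
        intro hcontra
        rw [sub_eq_zero] at hcontra
        rw [hcontra] at hy
        exact hy this
      have hQz : Q.eval z ≠ 0 := by
        intro h0
        have hzmem : z ∈ R := by
          rw [hRdef, Polynomial.mem_roots hQne]
          exact h0
        exact hy (hRprop z hzmem).1
      -- the recurrence, mapped and evaluated
      have hrec := congrArg (fun p => Polynomial.eval z (p.map (algebraMap ℚ ℂ))) (nar_rec n hn)
      simp only [Polynomial.map_mul, Polynomial.map_add, Polynomial.map_sub, Polynomial.map_C,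
        Polynomial.map_X, Polynomial.map_pow, eval_mul, eval_add, eval_sub, eval_C, eval_X,
        eval_pow, Polynomial.derivative_map] at hrec
      rw [show Polynomial.eval z ((narayanaA (n+1)).map (algebraMap ℚ ℂ)) = 0 from hroot] at hrec
      -- log derivative
      rw [← Polynomial.derivative_map] at hrec
      rw [← hQdef] at hrec
      set S : ℂ := (R.map (fun r => (z - r)⁻¹)).sum with hSdef
      have hQ'z : Polynomial.eval z (derivative Q) = Q.eval z * S := by
        conv_lhs => rw [hQfact]
        rw [deriv_prod_eval R z hzr, ← hQfact]
      rw [hQ'z] at hrec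
      -- derive the scalar equation
      have hW : (algebraMap ℚ ℂ) ((n:ℚ)) + (algebraMap ℚ ℂ) (3*(n:ℚ)+2) * z
          + 2*(z - z^2) * S = 0 := by
        simp only [map_ofNat, mul_zero] at hrec
        have h2 : Q.eval z * ((algebraMap ℚ ℂ) ((n:ℚ)) + (algebraMap ℚ ℂ) (3*(n:ℚ)+2) * z
            + 2*(z - z^2) * S) = 0 := by
          linear_combination -hrec
        rcases mul_eq_zero.1 h2 with h | h
        · exact absurd h hQz
        · exact h
      have hcast1 : (algebraMap ℚ ℂ) ((n:ℚ)) = ((n:ℝ) : ℂ) := by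
        simp [eq_ratCast]
      have hcast2 : (algebraMap ℚ ℂ) (3*(n:ℚ)+2) = ((3*(n:ℝ)+2 : ℝ) : ℂ) := by
        push_cast
        simp [eq_ratCast]
      rw [hcast1, hcast2] at hW
      -- imaginary part
      set T : ℝ := (R.map (fun r => tfun z r.re)).sum with hTdef
      have hsum : (2*(z - z^2) * S).im = z.im * T := by
        rw [hSdef, ← Multiset.sum_map_mul_left, im_msum, Multiset.map_map]
        have hcongr : ∀ r ∈ R, (Complex.im ∘ fun r => 2*(z - z^2) * (z - r)⁻¹) r
            = ((fun r : ℂ => z.im * tfun z r.re)) r := by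
          intro r hr
          have h1 : (r : ℂ) = ((r.re : ℝ) : ℂ) := Complex.ext rfl (by simp [(hRprop r hr).1])
          simp only [Function.comp_apply]
          conv_lhs => rw [h1]
          exact lemB z r.re hy
        rw [Multiset.map_congr rfl hcongr, Multiset.sum_map_mul_left]
      have hTbound : (-2 : ℝ) * n ≤ T := by
        have hb : ∀ x ∈ R.map (fun r : ℂ => tfun z r.re), (-2:ℝ) ≤ x := by
          intro x hx
          obtain ⟨r, hr, rfl⟩ := Multiset.mem_map.1 hx
          exact lemB2 z r.re hy (hRprop r hr).2
        have := Multiset.card_nsmul_le_sum hb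
        rwa [Multiset.card_map, hcard, nsmul_eq_mul, mul_comm ((n:ℝ)) (-2:ℝ)] at this
      have him0 := congrArg Complex.im hW
      simp only [Complex.add_im, Complex.ofReal_im, Complex.im_ofReal_mul, hsum,
        Complex.zero_im] at him0
      -- 0 = (3n+2) z.im + z.im * T
      have hT : T = -(3*(n:ℝ)+2) := by
        have h3 : z.im * ((3*(n:ℝ)+2) + T) = 0 := by linarith
        rcases mul_eq_zero.1 h3 with h | h
        · exact absurd h hy
        · linarith
      have hn' : (1:ℝ) ≤ n := by exact_mod_cast hn
      linarith
    exact ⟨him, nar_real_root_nonpos (n+1) (by omega) z hroot him⟩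


theorem narayanaA_real_rooted (n : ℕ) (hn : 1 ≤ n) (z : ℂ) :
    ((narayanaA n).map (algebraMap ℚ ℂ)).IsRoot z → z.im = 0 := by
  intro h
  exact (nar_aux n hn z h).1
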